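/- Let ⟨T, Σ, C₁ ⊑ C₂⟩ with Σ = N_C be an EL TBox abduction problem with T in normal form and ⊤-free, Φ its first-order translation, and 𝔗 = (V,E,v₀,l) an EL description tree. Then T ⊨ C₁ ⊑ C_𝔗 holds if and only if there exists a Skolem labeling sl of 𝔗 such that sl(v₀) = sk₀ and I^c(sl) ⊆ PI^{g+}_{N_C}(Φ). -/

import Mathlib

namespace ELAbd

/-! ### EL concepts, TBoxes, semantics -/

inductive ELConcept : Type where
  | top : ELConcept
  | atom : ℕ → ELConcept
  | conj : ELConcept → ELConcept → ELConcept
  | ex : ℕ → ELConcept → ELConcept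
deriving DecidableEq

abbrev CI := ELConcept × ELConcept
abbrev TBox := Finset CI

structure Interp (α : Type) where
  conc : ℕ → Set α
  role : ℕ → Set (α × α)

def ELConcept.sem {α : Type} (I : Interp α) : ELConcept → Set α
  | .top => Set.univ
  | .atom A => I.conc A
  | .conj C D => C.sem I ∩ D.sem I
  | .ex r C => {d | ∃ e, (d, e) ∈ I.role r ∧ e ∈ C.sem I}

def Models {α : Type} (I : Interp α) (T : TBox) : Prop :=
  ∀ ci ∈ T, ci.1.sem I ⊆ ci.2.sem I

def Entails (T : TBox) (C D : ELConcept) : Prop :=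
  ∀ (α : Type) (I : Interp α), Models I T → C.sem I ⊆ D.sem I

def EntailsCI (T : TBox) (ci : CI) : Prop := Entails T ci.1 ci.2

def TEntails (T T' : TBox) : Prop :=
  ∀ (α : Type) (I : Interp α), Models I T → Models I T'

def TEquiv (T T' : TBox) : Prop := TEntails T T' ∧ TEntails T' T

/-- Equality of concepts modulo the convention that conjunctions are read as
sets (associativity, commutativity, idempotence, `⊤` as empty conjunction). -/
inductive CEq : ELConcept → ELConcept → Prop
  | refl (C) : CEq C C
  | symm {C D} : CEq C D → CEq D C
  | trans {C D E} : CEq C D → CEq D E → CEq C E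
  | congr_conj {C C' D D'} : CEq C C' → CEq D D' → CEq (.conj C D) (.conj C' D')
  | congr_ex {r C C'} : CEq C C' → CEq (.ex r C) (.ex r C')
  | comm (C D) : CEq (.conj C D) (.conj D C)
  | assoc (C D E) : CEq (.conj (.conj C D) E) (.conj C (.conj D E))
  | idem (C) : CEq (.conj C C) C
  | top_unit (C) : CEq (.conj .top C) C

/-- The relation `≼⊓` on concepts. -/
inductive PrecSq : ELConcept → ELConcept → Prop
  | refl (C) : PrecSq C C
  | conjL {C D'} (D'') : PrecSq C D' → PrecSq C (.conj D' D'')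
  | ex (r) {C' D'} : PrecSq C' D' → PrecSq (.ex r C') (.ex r D')

def ELConcept.concNames : ELConcept → Set ℕ
  | .top => ∅
  | .atom A => {A}
  | .conj C D => C.concNames ∪ D.concNames
  | .ex _ C => C.concNames

def ELConcept.roleNames : ELConcept → Set ℕ
  | .top => ∅
  | .atom _ => ∅
  | .conj C D => C.roleNames ∪ D.roleNames
  | .ex r C => {r} ∪ C.roleNames

def ELConcept.size : ELConcept → ℕ
  | .top => 1
  | .atom _ => 1
  | .conj C D => C.size + D.size + 1
  | .ex _ C => C.size + 1

def ELConcept.exCount : ELConcept → ℕ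
  | .top => 0
  | .atom _ => 0
  | .conj C D => C.exCount + D.exCount
  | .ex _ C => C.exCount + 1

def tboxSize (T : TBox) : ℕ := T.sum (fun ci => ci.1.size + ci.2.size)

def tboxConcNames (T : TBox) : Set ℕ :=
  {A | ∃ ci ∈ T, A ∈ ci.1.concNames ∪ ci.2.concNames}

def tboxRoleNames (T : TBox) : Set ℕ :=
  {r | ∃ ci ∈ T, r ∈ ci.1.roleNames ∪ ci.2.roleNames}

/-- Normal form (simultaneously `⊤`-free): every CI has one of the four shapes
`A ⊑ B`, `A₁ ⊓ A₂ ⊑ B`, `∃r.A ⊑ B`, `A ⊑ ∃r.B` with atomic concepts. -/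
def NFci (ci : CI) : Prop :=
  (∃ A B, ci = (ELConcept.atom A, ELConcept.atom B)) ∨
  (∃ A₁ A₂ B, ci = (ELConcept.conj (.atom A₁) (.atom A₂), ELConcept.atom B)) ∨
  (∃ r A B, ci = (ELConcept.ex r (.atom A), ELConcept.atom B)) ∨
  (∃ A r B, ci = (ELConcept.atom A, ELConcept.ex r (.atom B)))

def NormalForm (T : TBox) : Prop := ∀ ci ∈ T, NFci ci

/-- Normal form where the components may also be `⊤`. -/
def AtomTop (C : ELConcept) : Prop := C = .top ∨ ∃ A, C = ELConcept.atom A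

def NFciTop (ci : CI) : Prop :=
  (AtomTop ci.1 ∧ AtomTop ci.2) ∨
  (∃ A₁ A₂, ci.1 = ELConcept.conj A₁ A₂ ∧ AtomTop A₁ ∧ AtomTop A₂ ∧ AtomTop ci.2) ∨
  (∃ r A, ci.1 = ELConcept.ex r A ∧ AtomTop A ∧ AtomTop ci.2) ∨
  (∃ r B, ci.2 = ELConcept.ex r B ∧ AtomTop B ∧ AtomTop ci.1)

def NormalFormTop (T : TBox) : Prop := ∀ ci ∈ T, NFciTop ci

/-! ### EL description trees -/

noncomputable def conjOf (s : Finset ℕ) : ELConcept :=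
  (s.toList.map ELConcept.atom).foldr ELConcept.conj ELConcept.top

structure DescTree where
  V : Finset ℕ
  root : ℕ
  E : Finset (ℕ × ℕ × ℕ)      -- (v, r, w) : edge from v to w labeled r
  label : ℕ → Finset ℕ
  dep : ℕ → ℕ
  root_mem : root ∈ V
  edge_mem : ∀ e ∈ E, e.1 ∈ V ∧ e.2.2 ∈ V
  parent_unique : ∀ e ∈ E, ∀ e' ∈ E, e.2.2 = e'.2.2 → e = e'
  parent_exists : ∀ v ∈ V, v ≠ root → ∃ e ∈ E, e.2.2 = v
  dep_root : dep root = 0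
  dep_edge : ∀ e ∈ E, dep e.2.2 = dep e.1 + 1

noncomputable def DescTree.conceptAt (t : DescTree) : ℕ → ℕ → ELConcept
  | 0, v => conjOf (t.label v)
  | n + 1, v =>
      ((t.label v).toList.map ELConcept.atom ++
        (t.E.filter (fun e => e.1 = v)).toList.map
          (fun e => ELConcept.ex e.2.1 (t.conceptAt n e.2.2))).foldr ELConcept.conj ELConcept.top

/-- The concept `C_𝔗` represented by a description tree. -/
noncomputable def DescTree.concept (t : DescTree) : ELConcept := t.conceptAt t.V.card t.root

/-- `t` is a description tree for the concept `D` (concept equality is taken modulo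
the conjunctions-as-sets convention). -/
def Represents (t : DescTree) (D : ELConcept) : Prop := CEq t.concept D

/-- Weak homomorphism from `src` to `tgt`. -/
def WeakHom (src tgt : DescTree) (φ : ℕ → ℕ) : Prop :=
  φ src.root = tgt.root ∧ ∀ e ∈ src.E, (φ e.1, e.2.1, φ e.2.2) ∈ tgt.E

/-- `T`-homomorphism from `src` to `tgt`. -/
def THom (T : TBox) (src tgt : DescTree) (φ : ℕ → ℕ) : Prop :=
  WeakHom src tgt φ ∧
  ∀ w ∈ src.V, Entails T (conjOf (tgt.label (φ w))) (conjOf (src.label w))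

/-! ### Abduction problems, hypotheses, connection minimality -/

inductive AtomConj (S : Set ℕ) : ELConcept → Prop
  | atom {A} : A ∈ S → AtomConj S (.atom A)
  | conj {C D} : AtomConj S C → AtomConj S D → AtomConj S (.conj C D)

def IsHypothesis (T : TBox) (S : Set ℕ) (C1 C2 : ℕ) (H : TBox) : Prop :=
  (∀ ci ∈ H, (AtomConj S ci.1 ∨ ci.1 = ELConcept.top) ∧ AtomConj S ci.2) ∧
  Entails (T ∪ H) (.atom C1) (.atom C2) ∧
  ∀ ci ∈ H, ¬ EntailsCI T ci

def BuiltOver (S : Set ℕ) (C : ELConcept) : Prop := C.concNames ⊆ S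

/-- The TBox determined by condition (4) of the definition of connection minimality. -/
def hypSetOf (T : TBox) (t1 t2 : DescTree) (φ : ℕ → ℕ) : Set CI :=
  {ci | ∃ w ∈ t2.V, ci = (conjOf (t1.label (φ w)), conjOf (t2.label w)) ∧
        ¬ EntailsCI T ci}

/-- Conditions (1)–(4) of connection minimality, with explicit witnessing
description trees `t1`, `t2` for `D1`, `D2` and the weak homomorphism `φ`
from `𝔗_{D₂}` to `𝔗_{D₁}`. -/
def ConnMinimalWit (T : TBox) (S : Set ℕ) (C1 C2 : ℕ) (H : TBox)
    (D1 D2 : ELConcept) (t1 t2 : DescTree) (φ : ℕ → ℕ) : Prop :=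
  BuiltOver S D1 ∧ BuiltOver S D2 ∧
  Represents t1 D1 ∧ Represents t2 D2 ∧
  Entails T (.atom C1) D1 ∧
  Entails T D2 (.atom C2) ∧
  (∀ D2', Entails T D2' (.atom C2) → PrecSq D2' D2 → PrecSq D2 D2') ∧
  WeakHom t2 t1 φ ∧
  (↑H : Set CI) = hypSetOf T t1 t2 φ

def ConnMinimal (T : TBox) (S : Set ℕ) (C1 C2 : ℕ) (H : TBox) : Prop :=
  IsHypothesis T S C1 C2 H ∧
  ∃ D1 D2 t1 t2 φ, ConnMinimalWit T S C1 C2 H D1 D2 t1 t2 φ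

/-- Packedness of a witness: no alternative `D₁'`, `φ'` (for the same `D₂`, `t₂`)
strictly enlarges one of the left-hand side labels while keeping all others. -/
def PackedWit (T : TBox) (S : Set ℕ) (C1 : ℕ) (t1 t2 : DescTree) (φ : ℕ → ℕ) : Prop :=
  ¬ ∃ (D1' : ELConcept) (t1' : DescTree) (φ' : ℕ → ℕ) (w : ℕ),
      BuiltOver S D1' ∧ Represents t1' D1' ∧ Entails T (.atom C1) D1' ∧
      WeakHom t2 t1' φ' ∧ w ∈ t2.V ∧
      t1.label (φ w) ⊂ t1'.label (φ' w) ∧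
      ∀ w' ∈ t2.V, w' ≠ w → t1.label (φ w') = t1'.label (φ' w')

def PackedConnMinimal (T : TBox) (S : Set ℕ) (C1 C2 : ℕ) (H : TBox) : Prop :=
  IsHypothesis T S C1 C2 H ∧
  ∃ D1 D2 t1 t2 φ, ConnMinimalWit T S C1 C2 H D1 D2 t1 t2 φ ∧
    PackedWit T S C1 t1 t2 φ

/-! ### First-order logic: terms, clauses, semantics -/

/-- Skolem functions: one for each (copy, axiom) pair. -/
abbrev SkFun := Bool × CI

inductive Term : Type where
  | var : ℕ → Term
  | sk0 : Term
  | app : SkFun → Term → Term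
deriving DecidableEq

/-- Ground Skolem terms. -/
inductive GTerm : Type where
  | sk0 : GTerm
  | app : SkFun → GTerm → GTerm
deriving DecidableEq

def GTerm.toTerm : GTerm → Term
  | .sk0 => .sk0
  | .app f t => .app f t.toTerm

def GTerm.depth : GTerm → ℕ
  | .sk0 => 0
  | .app _ t => t.depth + 1

inductive GTerm.Subterm : GTerm → GTerm → Prop
  | refl (t) : GTerm.Subterm t t
  | app {s t} (f) : GTerm.Subterm s t → GTerm.Subterm s (.app f t)

/-- Atoms; unary predicates `(b, A)` where `b = false` marks the original copy of the
atomic concept `A` and `b = true` its duplicate `Ā`. -/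
inductive Atm : Type where
  | conc : (Bool × ℕ) → Term → Atm
  | role : ℕ → Term → Term → Atm
deriving DecidableEq

structure Lit : Type where
  pos : Bool
  atm : Atm
deriving DecidableEq

abbrev Clause := Finset Lit

inductive GAtm : Type where
  | conc : (Bool × ℕ) → GTerm → GAtm
  | role : ℕ → GTerm → GTerm → GAtm
deriving DecidableEq

def GAtm.toAtm : GAtm → Atm
  | .conc P t => .conc P t.toTerm
  | .role r t u => .role r t.toTerm u.toTerm

structure FOInterp (α : Type) where
  c0 : α
  app : SkFun → α → α
  conc : Bool × ℕ → Set α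
  role : ℕ → Set (α × α)

def Term.eval {α : Type} (I : FOInterp α) (ρ : ℕ → α) : Term → α
  | .var x => ρ x
  | .sk0 => I.c0
  | .app f t => I.app f (t.eval I ρ)

def Atm.sat {α : Type} (I : FOInterp α) (ρ : ℕ → α) : Atm → Prop
  | .conc P t => t.eval I ρ ∈ I.conc P
  | .role r t u => (t.eval I ρ, u.eval I ρ) ∈ I.role r

def Lit.sat {α : Type} (I : FOInterp α) (ρ : ℕ → α) (l : Lit) : Prop :=
  if l.pos then l.atm.sat I ρ else ¬ l.atm.sat I ρ

/-- Satisfaction of a clause: the universal closure of the disjunction holds. -/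
def ClauseSat {α : Type} (I : FOInterp α) (c : Clause) : Prop :=
  ∀ ρ : ℕ → α, ∃ l ∈ c, l.sat I ρ

def CModels {α : Type} (I : FOInterp α) (Ψ : Set Clause) : Prop :=
  ∀ c ∈ Ψ, ClauseSat I c

def CEntails (Ψ : Set Clause) (c : Clause) : Prop :=
  ∀ (α : Type) (I : FOInterp α), CModels I Ψ → ClauseSat I c

def ClEntails (c d : Clause) : Prop := CEntails {c} d

def IsPrimeImplicate (Ψ : Set Clause) (c : Clause) : Prop :=
  CEntails Ψ c ∧ ∀ c' : Clause, CEntails Ψ c' → ClEntails c' c → ClEntails c c'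

def Term.vars : Term → Set ℕ
  | .var x => {x}
  | .sk0 => ∅
  | .app _ t => t.vars

def Atm.vars : Atm → Set ℕ
  | .conc _ t => t.vars
  | .role _ t u => t.vars ∪ u.vars

def ClauseVars (c : Clause) : Set ℕ := {x | ∃ l ∈ c, x ∈ l.atm.vars}

def ClauseGround (c : Clause) : Prop := ClauseVars c = ∅
def ClausePositive (c : Clause) : Prop := ∀ l ∈ c, l.pos = true
def ClauseNegative (c : Clause) : Prop := ∀ l ∈ c, l.pos = false

def Atm.inSig (S : Set ℕ) : Atm → Prop
  | .conc P _ => P.2 ∈ S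
  | .role _ _ _ => True

def ClauseInSig (S : Set ℕ) (c : Clause) : Prop := ∀ l ∈ c, l.atm.inSig S

/-- Positive ground prime implicates over `Σ ∪ N_R`. -/
def PIpos (S : Set ℕ) (Ψ : Set Clause) : Set Clause :=
  {c | IsPrimeImplicate Ψ c ∧ ClauseGround c ∧ ClausePositive c ∧ ClauseInSig S c}

/-- Negative ground prime implicates over `Σ ∪ N_R`. -/
def PIneg (S : Set ℕ) (Ψ : Set Clause) : Set Clause :=
  {c | IsPrimeImplicate Ψ c ∧ ClauseGround c ∧ ClauseNegative c ∧ ClauseInSig S c}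

/-- The ground atom `a` belongs (as a unit clause) to `PI^{g+}_Σ(Ψ)`. -/
def InPIpos (S : Set ℕ) (Ψ : Set Clause) (a : GAtm) : Prop :=
  ({⟨true, a.toAtm⟩} : Clause) ∈ PIpos S Ψ

/-! ### Substitutions and resolution -/

def Term.subst (σ : ℕ → Term) : Term → Term
  | .var x => σ x
  | .sk0 => .sk0
  | .app f t => .app f (t.subst σ)

def Atm.subst (σ : ℕ → Term) : Atm → Atm
  | .conc P t => .conc P (t.subst σ)
  | .role r t u => .role r (t.subst σ) (u.subst σ)

def Lit.subst (σ : ℕ → Term) (l : Lit) : Lit := ⟨l.pos, l.atm.subst σ⟩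

def ClauseSubst (σ : ℕ → Term) (c : Clause) : Clause := c.image (Lit.subst σ)

def IsUnifier (σ : ℕ → Term) (a b : Atm) : Prop := a.subst σ = b.subst σ

def IsMGU (σ : ℕ → Term) (a b : Atm) : Prop :=
  IsUnifier σ a b ∧ ∀ τ, IsUnifier τ a b → ∃ δ, ∀ x, (σ x).subst δ = τ x

/-- Resolution derivations from `Ψ`, where every resolvent must satisfy `ok`. -/
inductive Deriv (Ψ : Set Clause) (ok : Clause → Prop) : Clause → Prop
  | hyp {c : Clause} : c ∈ Ψ → Deriv Ψ ok c
  | res {c₁ c₂ : Clause} {a b : Atm} {σ : ℕ → Term} :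
      Deriv Ψ ok c₁ → Deriv Ψ ok c₂ →
      (⟨true, a⟩ : Lit) ∈ c₁ → (⟨false, b⟩ : Lit) ∈ c₂ → IsMGU σ a b →
      ok (ClauseSubst σ (c₁.erase ⟨true, a⟩ ∪ c₂.erase ⟨false, b⟩)) →
      Deriv Ψ ok (ClauseSubst σ (c₁.erase ⟨true, a⟩ ∪ c₂.erase ⟨false, b⟩))
  | factor {c : Clause} {l₁ l₂ : Lit} {σ : ℕ → Term} :
      Deriv Ψ ok c → l₁ ∈ c → l₂ ∈ c → l₁ ≠ l₂ → l₁.pos = l₂.pos →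
      IsMGU σ l₁.atm l₂.atm →
      ok (ClauseSubst σ (c.erase l₂)) →
      Deriv Ψ ok (ClauseSubst σ (c.erase l₂))

/-! ### The translation Φ of an abduction problem -/

def vx : Term := .var 0
def vy : Term := .var 1
def pcl (b : Bool) (A : ℕ) (t : Term) : Lit := ⟨true, .conc (b, A) t⟩
def ncl (b : Bool) (A : ℕ) (t : Term) : Lit := ⟨false, .conc (b, A) t⟩
def prl (r : ℕ) (t u : Term) : Lit := ⟨true, .role r t u⟩
def nrl (r : ℕ) (t u : Term) : Lit := ⟨false, .role r t u⟩

def clausesOf (b : Bool) (ci : CI) : Set Clause :=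
  match ci with
  | (.atom A, .atom B) => {({ncl b A vx, pcl b B vx} : Clause)}
  | (.conj (.atom A₁) (.atom A₂), .atom B) =>
      {({ncl b A₁ vx, ncl b A₂ vx, pcl b B vx} : Clause)}
  | (.ex r (.atom A), .atom B) =>
      {({nrl r vx vy, ncl b A vy, pcl b B vx} : Clause)}
  | (.atom A, .ex r (.atom B)) =>
      {({ncl b A vx, prl r vx (.app (b, (.atom A, .ex r (.atom B))) vx)} : Clause),
       ({ncl b A vx, pcl b B (.app (b, (.atom A, .ex r (.atom B))) vx)} : Clause)}
  | _ => ∅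

/-- The clausal translation `Φ` of the abduction problem `⟨T, Σ, C₁ ⊑ C₂⟩`. -/
def Translation (T : TBox) (C1 C2 : ℕ) : Set Clause :=
  (⋃ ci ∈ T, clausesOf false ci ∪ clausesOf true ci) ∪
  {({pcl false C1 .sk0} : Clause), ({ncl true C2 .sk0} : Clause)}

/-- The presaturation `Φ_p` of a clause set. -/
def presat (Ψ : Set Clause) : Set Clause :=
  Ψ ∪ {c | ∃ (b : Bool) (A B : ℕ),
        c = ({ncl b A vx, pcl b B vx} : Clause) ∧ CEntails Ψ c}

/-! ### Herbrand interpretations -/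

def herb (S : Set GAtm) : FOInterp GTerm where
  c0 := .sk0
  app := .app
  conc := fun P => {t | GAtm.conc P t ∈ S}
  role := fun r => {p | GAtm.role r p.1 p.2 ∈ S}

def HModels (S : Set GAtm) (Ψ : Set Clause) : Prop := CModels (herb S) Ψ

def piPosAtoms (S : Set ℕ) (Ψ : Set Clause) : Set GAtm := {a | InPIpos S Ψ a}

/-- EL semantics of a concept in a Herbrand interpretation (original predicates). -/
def gsem (I : Set GAtm) : ELConcept → Set GTerm
  | .top => Set.univ
  | .atom A => {t | GAtm.conc (false, A) t ∈ I}
  | .conj C D => gsem I C ∩ gsem I D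
  | .ex r C => {t | ∃ u, GAtm.role r t u ∈ I ∧ u ∈ gsem I C}

/-! ### Canonical models of description trees -/

/-- The canonical model `I^c(sl)` of a description tree with Skolem labeling `sl`. -/
def canonModel (t : DescTree) (sl : ℕ → GTerm) : Set GAtm :=
  {a | ∃ e ∈ t.E, a = GAtm.role e.2.1 (sl e.1) (sl e.2.2)} ∪
  {a | ∃ v ∈ t.V, ∃ A ∈ t.label v, a = GAtm.conc (false, A) (sl v)}

/-- The unary-predicate part `I^c_A(sl)` of the canonical model, as labelled pairs. -/
def canonA (t : DescTree) (sl : ℕ → GTerm) : Set (ℕ × GTerm) :=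
  {p | ∃ v ∈ t.V, p.1 ∈ t.label v ∧ p.2 = sl v}

/-- The clause `⋁_{v ∈ V₂, B ∈ l₂(v)} ¬B̄(sl v)`. -/
def negTreeClause (t : DescTree) (sl : ℕ → GTerm) : Clause :=
  t.V.biUnion (fun v =>
    (t.label v).image (fun B => (⟨false, Atm.conc (true, B) (sl v).toTerm⟩ : Lit)))

/-! ### Constructible hypotheses -/

def negClauseOf (B : Finset (ℕ × GTerm)) : Clause :=
  B.image (fun p => (⟨false, Atm.conc (true, p.1) p.2.toTerm⟩ : Lit))

def posUnit (p : ℕ × GTerm) : Clause := {⟨true, Atm.conc (false, p.1) p.2.toTerm⟩}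

/-- `C_{X,t} = ⊓{A | A(t) ∈ X}`. -/
noncomputable def CAt (X : Finset (ℕ × GTerm)) (t : GTerm) : ELConcept :=
  conjOf ((X.filter (fun p => p.2 = t)).image Prod.fst)

/-- `H` is the hypothesis constructed from the sets `A` and `B` of ground atoms. -/
def ConstructibleVia (S : Set ℕ) (Ψ : Set Clause)
    (A B : Finset (ℕ × GTerm)) (H : TBox) : Prop :=
  A.Nonempty ∧ B.Nonempty ∧
  negClauseOf B ∈ PIneg S Ψ ∧
  (∀ p ∈ B, ∃ a, InPIpos S Ψ (GAtm.conc (false, a) p.2)) ∧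
  ((↑A : Set (ℕ × GTerm)) =
    {q | InPIpos S Ψ (GAtm.conc (false, q.1) q.2) ∧ ∃ p ∈ B, p.2 = q.2}) ∧
  ((↑H : Set CI) =
    {ci | ∃ p ∈ B, ci = (CAt A p.2, CAt B p.2) ∧ ¬ PrecSq (CAt B p.2) (CAt A p.2)})

def Constructible (S : Set ℕ) (Ψ : Set Clause) (H : TBox) : Prop :=
  ∃ A B, ConstructibleVia S Ψ A B H

/-! ### Clause shapes I3–I7, signature counts -/

def isI3 (c : Clause) : Prop :=
  ∃ P Q : Bool × ℕ, c = ({⟨false, .conc P vx⟩, ⟨true, .conc Q vx⟩} : Clause)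

def isI4 (c : Clause) : Prop :=
  ∃ P₁ P₂ Q : Bool × ℕ,
    c = ({⟨false, .conc P₁ vx⟩, ⟨false, .conc P₂ vx⟩, ⟨true, .conc Q vx⟩} : Clause)

def isI5 (c : Clause) : Prop :=
  ∃ (r : ℕ) (P Q : Bool × ℕ),
    c = ({⟨false, .role r vx vy⟩, ⟨false, .conc P vy⟩, ⟨true, .conc Q vx⟩} : Clause)

def isI7 (c : Clause) : Prop :=
  ∃ (P Q : Bool × ℕ) (f : SkFun),
    c = ({⟨false, .conc P vx⟩, ⟨true, .conc Q (.app f vx)⟩} : Clause)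

/-- The atomic concept `A_sk` occurring positively in the I7-clause introducing `sk`
(as a predicate, with the copy flag of `sk`). -/
def skHeadPred (f : SkFun) : Bool × ℕ :=
  (f.1, match f.2.2 with
        | .ex _ (.atom B) => B
        | _ => 0)

def Term.funs : Term → Set SkFun
  | .var _ => ∅
  | .sk0 => ∅
  | .app f t => insert f t.funs

def Atm.funs : Atm → Set SkFun
  | .conc _ t => t.funs
  | .role _ t u => t.funs ∪ u.funs

def clauseFuns (c : Clause) : Set SkFun := {f | ∃ l ∈ c, f ∈ l.atm.funs}

def clauseConcs (c : Clause) : Set (Bool × ℕ) := {P | ∃ l ∈ c, ∃ t, l.atm = Atm.conc P t}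

/-- The number of atomic concepts occurring in a clause set. -/
noncomputable def numConcs (Ψ : Set Clause) : ℕ := Set.ncard {P | ∃ c ∈ Ψ, P ∈ clauseConcs c}

/-- The number of occurrences of existential role restrictions in a TBox. -/
def exOccs (T : TBox) : ℕ := T.sum (fun ci => ci.1.exCount + ci.2.exCount)

/-- The number of Skolem functions occurring in `Ψ` introduced for the original copy. -/
noncomputable def numOrigSk (Ψ : Set Clause) : ℕ :=
  Set.ncard {f : SkFun | f.1 = false ∧ ∃ c ∈ Ψ, f ∈ clauseFuns c}

def unitC (P : Bool × ℕ) (t : GTerm) : Clause := {⟨true, .conc P t.toTerm⟩}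
def negUnitC (P : Bool × ℕ) (t : GTerm) : Clause := {⟨false, .conc P t.toTerm⟩}

/-! ### Skolem trees and solution trees -/

structure SkolemTree where
  V : Finset ℕ
  root : ℕ
  E : Finset (ℕ × ℕ)
  s : ℕ → GTerm
  dep : ℕ → ℕ
  root_mem : root ∈ V
  s_root : s root = .sk0
  edge_mem : ∀ e ∈ E, e.1 ∈ V ∧ e.2 ∈ V
  edge_term : ∀ e ∈ E, s e.2 = s e.1 ∨ ∃ f, s e.2 = GTerm.app f (s e.1)
  parent_unique : ∀ e ∈ E, ∀ e' ∈ E, e.2 = e'.2 → e = e'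
  parent_exists : ∀ v ∈ V, v ≠ root → ∃ e ∈ E, e.2 = v
  dep_root : dep root = 0
  dep_edge : ∀ e ∈ E, dep e.2 = dep e.1 + 1

/-- `v` is an ancestor of `w` (every node is an ancestor of itself). -/
def SkolemTree.Ancestor (F : SkolemTree) (v w : ℕ) : Prop :=
  Relation.ReflTransGen (fun a b => (a, b) ∈ F.E) v w

/-- The descendants of `v` (the nodes of the subtree under `v`). -/
def SkolemTree.Desc (F : SkolemTree) (v : ℕ) : Set ℕ := {w | F.Ancestor v w}

/-- The positive labeling `l⁺`. -/
def posLab (Ψ : Set Clause) (F : SkolemTree) (v : ℕ) : Set ℕ :=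
  {A | InPIpos Set.univ Ψ (GAtm.conc (false, A) (F.s v))}

def SkolemTree.children (F : SkolemTree) (v : ℕ) : Finset ℕ :=
  (F.E.filter (fun e => e.1 = v)).image Prod.snd

def SkolemTree.leaves (F : SkolemTree) : Finset ℕ :=
  F.V.filter (fun v => F.E.filter (fun e => e.1 = v) = ∅)

/-- The unit role facts `{r(t, sk(t)) ∈ PI^{g+}}`. -/
def roleFacts (Ψ : Set Clause) : Set Clause :=
  {c | (∃ (r : ℕ) (t : GTerm) (f : SkFun),
        c = ({⟨true, Atm.role r t.toTerm (GTerm.app f t).toTerm⟩} : Clause)) ∧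
       c ∈ PIpos Set.univ Ψ}

def nonGroundOf (Ψ : Set Clause) : Set Clause := {c | c ∈ Ψ ∧ ¬ ClauseGround c}

/-- Negative labeling `l⁻` for a Skolem tree (labels are duplicate concept names,
recorded by their underlying name in `N_C`). -/
def IsNegLabeling (Ψ : Set Clause) (C2 : ℕ) (F : SkolemTree) (ln : ℕ → ℕ) : Prop :=
  ln F.root = C2 ∧
  ∀ v ∈ F.V, F.children v ≠ ∅ →
    Deriv ({negUnitC (true, ln v) (F.s v)} ∪ roleFacts Ψ ∪ nonGroundOf (presat Ψ))
      (fun _ => True)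
      ((F.children v).image
        (fun w => (⟨false, Atm.conc (true, ln w) (F.s w).toTerm⟩ : Lit)))

/-- The clause `φ_{F,l⁻}` determined by the leaves.  (Clauses are finite sets of
literals, so it is automatically considered up to repetition of literals.) -/
def leavesClause (F : SkolemTree) (ln : ℕ → ℕ) : Clause :=
  F.leaves.image (fun v => (⟨false, Atm.conc (true, ln v) (F.s v).toTerm⟩ : Lit))

def IsSolutionTree (Ψ : Set Clause) (C2 : ℕ) (F : SkolemTree) (ln : ℕ → ℕ) : Prop :=
  (∀ v ∈ F.V, (posLab Ψ F v).Nonempty) ∧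
  IsNegLabeling Ψ C2 F ln ∧
  leavesClause F ln ∈ PIneg Set.univ Ψ ∧
  ∃ (A B : Finset (ℕ × GTerm)) (H : TBox),
    ConstructibleVia Set.univ Ψ A B H ∧
    (↑B : Set (ℕ × GTerm)) = {p | ∃ v ∈ F.leaves, p = (ln v, F.s v)}

/-- The solution `{⊓l⁺(v) ⊑ l⁻(v) | v a leaf}` of a solution tree. -/
def treeSol (Ψ : Set Clause) (F : SkolemTree) (ln : ℕ → ℕ) : Set CI :=
  {ci | ∃ v ∈ F.leaves, ∃ s : Finset ℕ, (↑s : Set ℕ) = posLab Ψ F v ∧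
        ci = (conjOf s, ELConcept.atom (ln v))}

/-- Minimality: no solution tree with strictly fewer nodes has a solution
included in the solution of this one. -/
def MinimalSolutionTree (Ψ : Set Clause) (C2 : ℕ) (F : SkolemTree) (ln : ℕ → ℕ) : Prop :=
  IsSolutionTree Ψ C2 F ln ∧
  ∀ (F' : SkolemTree) (ln' : ℕ → ℕ),
    IsSolutionTree Ψ C2 F' ln' →
    treeSol Ψ F' ln' ⊆ treeSol Ψ F ln →
    F.V.card ≤ F'.V.card

/-- Replace the (unique) occurrence of `old` as a suffix of a ground term by `new`. -/
def GTerm.replaceSuffix (old new : GTerm) : GTerm → GTerm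
  | .sk0 => if GTerm.sk0 = old then new else .sk0
  | .app f u => if GTerm.app f u = old then new else .app f (GTerm.replaceSuffix old new u)


/-! An element satisfies `C_𝔗` exactly when `𝔗` maps homomorphically into the interpretation
with the root sent to that element. For (⇒), the Herbrand interpretation of the ground atoms
entailed by `Φ` is a model of `T` with `sk₀ ∈ C₁`, so `𝔗` maps into it from `sk₀`. Such an
entailed atom is even a prime implicate: the clauses of `Φ` are range-restricted, so they stay
true when a dead point is added to a model, and there every non-ground positive clause fails.
For (⇐), a model `I` of `T` with `d ∈ C₁^I` becomes a model of `Φ` once the duplicates are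
empty and the Skolem functions pick witnesses; evaluating the Skolem labeling there gives a
homomorphism from `𝔗` into `I` sending the root to `d`. -/

section DescriptionTrees

variable {α : Type} (I : Interp α)

lemma ELConcept.mem_sem_foldr_conj (L : List ELConcept) (x : α) :
    x ∈ (L.foldr ELConcept.conj ELConcept.top).sem I ↔ ∀ C ∈ L, x ∈ C.sem I := by
  induction L with
  | nil => simp [ELConcept.sem]
  | cons C L ih => simp [ELConcept.sem, ih]

lemma mem_sem_conjOf (s : Finset ℕ) (x : α) :
    x ∈ (conjOf s).sem I ↔ ∀ A ∈ s, x ∈ I.conc A := by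
  simp [conjOf, ELConcept.mem_sem_foldr_conj, ELConcept.sem]

lemma DescTree.mem_sem_conceptAt_succ (t : DescTree) (n v : ℕ) (x : α) :
    x ∈ (t.conceptAt (n + 1) v).sem I ↔
      (∀ A ∈ t.label v, x ∈ I.conc A) ∧
      ∀ e ∈ t.E, e.1 = v → ∃ y, (x, y) ∈ I.role e.2.1 ∧ y ∈ (t.conceptAt n e.2.2).sem I := by
  rw [DescTree.conceptAt, ELConcept.mem_sem_foldr_conj]
  simp only [List.forall_mem_append, List.forall_mem_map, Finset.mem_toList, Finset.mem_filter,
    and_imp]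
  rfl

lemma DescTree.label_subset_of_mem_sem_conceptAt {t : DescTree} {n v : ℕ} {x : α}
    (hx : x ∈ (t.conceptAt n v).sem I) : ∀ A ∈ t.label v, x ∈ I.conc A := by
  cases n with
  | zero => exact (mem_sem_conjOf I _ x).1 hx
  | succ n => exact ((t.mem_sem_conceptAt_succ I n v x).1 hx).1

def DescTree.IsHom (t : DescTree) (m : ℕ → α) : Prop :=
  (∀ v ∈ t.V, ∀ A ∈ t.label v, m v ∈ I.conc A) ∧ ∀ e ∈ t.E, (m e.1, m e.2.2) ∈ I.role e.2.1

lemma DescTree.IsHom.mem_sem_conceptAt {t : DescTree} {m : ℕ → α} (h : t.IsHom I m) (n : ℕ) :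
    ∀ v ∈ t.V, m v ∈ (t.conceptAt n v).sem I := by
  induction n with
  | zero => exact fun v hv => (mem_sem_conjOf I _ _).2 (h.1 v hv)
  | succ n ih =>
      refine fun v hv => (t.mem_sem_conceptAt_succ I n v _).2 ⟨h.1 v hv, fun e he hev => ?_⟩
      exact ⟨m e.2.2, hev ▸ h.2 e he, ih _ (t.edge_mem e he).2⟩

namespace DescTree

variable (t : DescTree)

noncomputable def parentEdge (v : ℕ) : ℕ × ℕ × ℕ :=
  if h : v ∈ t.V ∧ v ≠ t.root then (t.parent_exists v h.1 h.2).choose else (v, 0, v)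

lemma parentEdge_mem {v : ℕ} (hv : v ∈ t.V) (hr : v ≠ t.root) :
    t.parentEdge v ∈ t.E ∧ (t.parentEdge v).2.2 = v := by
  rw [parentEdge, dif_pos ⟨hv, hr⟩]
  exact (t.parent_exists v hv hr).choose_spec

lemma dep_parentEdge {v : ℕ} (hv : v ∈ t.V) (hr : v ≠ t.root) :
    t.dep v = t.dep (t.parentEdge v).1 + 1 := by
  obtain ⟨he, hev⟩ := t.parentEdge_mem hv hr
  rw [← t.dep_edge _ he, hev]

lemma ne_root_of_mem_E {e : ℕ × ℕ × ℕ} (he : e ∈ t.E) : e.2.2 ≠ t.root := by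
  intro h
  have := t.dep_edge e he
  rw [h, t.dep_root] at this
  omega

lemma parentEdge_eq {e : ℕ × ℕ × ℕ} (he : e ∈ t.E) : t.parentEdge e.2.2 = e :=
  have h := t.parentEdge_mem (t.edge_mem e he).2 (t.ne_root_of_mem_E he)
  t.parent_unique _ h.1 e he h.2

lemma exists_dep_eq {v : ℕ} (hv : v ∈ t.V) {j : ℕ} (hj : j ≤ t.dep v) :
    ∃ w ∈ t.V, t.dep w = j := by
  induction h : t.dep v using Nat.strong_induction_on generalizing v with
  | _ k ih =>
    rcases hj.eq_or_lt with hj | hj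
    · exact ⟨v, hv, by omega⟩
    · have hr : v ≠ t.root := by rintro rfl; rw [t.dep_root] at hj; omega
      have hdep := t.dep_parentEdge hv hr
      exact ih _ (by omega) (t.edge_mem _ (t.parentEdge_mem hv hr).1).1 (by omega) rfl

lemma dep_lt_card {v : ℕ} (hv : v ∈ t.V) : t.dep v < t.V.card := by
  have hsub : Finset.range (t.dep v + 1) ⊆ t.V.image t.dep := fun j hj => by
    obtain ⟨w, hw, rfl⟩ := t.exists_dep_eq hv (Nat.lt_succ_iff.1 (Finset.mem_range.1 hj))
    exact Finset.mem_image_of_mem _ hw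
  have := (Finset.card_le_card hsub).trans Finset.card_image_le
  simpa using this

/-- `t.conceptAt (t.V.card - t.dep v) v` is the subconcept of `t.concept` at `v`.
`Classical.epsilon` gives a junk value where no suitable successor exists, which
`homInto_mem_sem` excludes when `x ∈ t.concept.sem I`. -/
noncomputable def homInto (x : α) (v : ℕ) : α :=
  if h : v ∈ t.V ∧ v ≠ t.root then
    have : t.dep (t.parentEdge v).1 < t.dep v := by rw [t.dep_parentEdge h.1 h.2]; omega
    haveI : Nonempty α := ⟨x⟩
    Classical.epsilon fun y =>
      (homInto x (t.parentEdge v).1, y) ∈ I.role (t.parentEdge v).2.1 ∧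
        y ∈ (t.conceptAt (t.V.card - t.dep v) v).sem I
  else x
termination_by t.dep v

lemma homInto_root (x : α) : t.homInto I x t.root = x := by
  rw [homInto, dif_neg (fun h => h.2 rfl)]

lemma homInto_of_ne_root {x : α} {v : ℕ} (hv : v ∈ t.V) (hr : v ≠ t.root) :
    haveI : Nonempty α := ⟨x⟩
    t.homInto I x v = Classical.epsilon fun y =>
      (t.homInto I x (t.parentEdge v).1, y) ∈ I.role (t.parentEdge v).2.1 ∧
        y ∈ (t.conceptAt (t.V.card - t.dep v) v).sem I := by
  rw [homInto, dif_pos ⟨hv, hr⟩]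

lemma homInto_edge {x : α} {e : ℕ × ℕ × ℕ} (he : e ∈ t.E)
    (hparent : t.homInto I x e.1 ∈ (t.conceptAt (t.V.card - t.dep e.1) e.1).sem I) :
    (t.homInto I x e.1, t.homInto I x e.2.2) ∈ I.role e.2.1 ∧
      t.homInto I x e.2.2 ∈ (t.conceptAt (t.V.card - t.dep e.2.2) e.2.2).sem I := by
  have hdep : t.V.card - t.dep e.1 = t.V.card - t.dep e.2.2 + 1 := by
    have := t.dep_lt_card (t.edge_mem e he).2
    rw [t.dep_edge e he] at this ⊢
    omega
  rw [hdep, mem_sem_conceptAt_succ] at hparent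
  have hchild := hparent.2 e he rfl
  rw [t.homInto_of_ne_root I (t.edge_mem e he).2 (t.ne_root_of_mem_E he), t.parentEdge_eq he]
  exact Classical.epsilon_spec hchild

lemma homInto_mem_sem {x : α} (hx : x ∈ t.concept.sem I) {v : ℕ} (hv : v ∈ t.V) :
    t.homInto I x v ∈ (t.conceptAt (t.V.card - t.dep v) v).sem I := by
  induction h : t.dep v using Nat.strong_induction_on generalizing v with
  | _ k ih =>
    by_cases hr : v = t.root
    · subst hr
      rwa [← h, t.dep_root, homInto_root]
    · obtain ⟨he, hev⟩ := t.parentEdge_mem hv hr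
      have hparent := ih _ (by rw [← h, t.dep_parentEdge hv hr]; omega) (t.edge_mem _ he).1 rfl
      have := (t.homInto_edge I he hparent).2
      rwa [hev, h] at this

lemma isHom_homInto {x : α} (hx : x ∈ t.concept.sem I) : t.IsHom I (t.homInto I x) :=
  ⟨fun _ hv => label_subset_of_mem_sem_conceptAt I (t.homInto_mem_sem I hx hv),
    fun e he => (t.homInto_edge I he (t.homInto_mem_sem I hx (t.edge_mem e he).1)).1⟩

theorem mem_sem_concept_iff (x : α) :
    x ∈ t.concept.sem I ↔ ∃ m : ℕ → α, m t.root = x ∧ t.IsHom I m := by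
  refine ⟨fun hx => ⟨t.homInto I x, t.homInto_root I x, t.isHom_homInto I hx⟩, ?_⟩
  rintro ⟨m, rfl, hm⟩
  exact hm.mem_sem_conceptAt I _ _ t.root_mem

end DescTree

end DescriptionTrees

section GroundAtoms

variable {α : Type}

def GTerm.eval (J : FOInterp α) : GTerm → α
  | .sk0 => J.c0
  | .app f t => J.app f (t.eval J)

@[simp]
lemma GTerm.eval_toTerm (J : FOInterp α) (ρ : ℕ → α) (g : GTerm) :
    g.toTerm.eval J ρ = g.eval J := by
  induction g <;> simp [GTerm.toTerm, GTerm.eval, Term.eval, *]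

@[simp]
lemma GTerm.eval_herb (S : Set GAtm) (g : GTerm) : g.eval (herb S) = g := by
  induction g with
  | sk0 => rfl
  | app f g ih => exact congrArg (GTerm.app f) ih

def GAtm.Holds (J : FOInterp α) : GAtm → Prop
  | .conc P t => t.eval J ∈ J.conc P
  | .role r t u => (t.eval J, u.eval J) ∈ J.role r

@[simp]
lemma GAtm.sat_toAtm (J : FOInterp α) (ρ : ℕ → α) (a : GAtm) :
    a.toAtm.sat J ρ ↔ a.Holds J := by
  cases a <;> simp [GAtm.toAtm, Atm.sat, GAtm.Holds]

lemma GAtm.holds_herb_iff (S : Set GAtm) (a : GAtm) : a.Holds (herb S) ↔ a ∈ S := by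
  cases a <;> simp only [GAtm.Holds, GTerm.eval_herb] <;> rfl

lemma clauseSat_unit_iff (J : FOInterp α) (a : GAtm) :
    ClauseSat J {⟨true, a.toAtm⟩} ↔ a.Holds J := by
  simp only [ClauseSat, Finset.mem_singleton, exists_eq_left, Lit.sat, GAtm.sat_toAtm, if_true]
  exact ⟨fun h => h fun _ => J.c0, fun h _ => h⟩

lemma cEntails_unit_iff (Ψ : Set Clause) (a : GAtm) :
    CEntails Ψ {⟨true, a.toAtm⟩} ↔ ∀ (β : Type) (J : FOInterp β), CModels J Ψ → a.Holds J := by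
  simp only [CEntails, clauseSat_unit_iff]

def Term.inst (ρ : ℕ → GTerm) : Term → GTerm
  | .var x => ρ x
  | .sk0 => .sk0
  | .app f t => .app f (t.inst ρ)

lemma Term.eval_herb (S : Set GAtm) (ρ : ℕ → GTerm) (t : Term) :
    t.eval (herb S) ρ = t.inst ρ := by
  induction t with
  | var x => rfl
  | sk0 => rfl
  | app f t ih => exact congrArg (GTerm.app f) ih

lemma Term.toTerm_inst {t : Term} (ht : t.vars = ∅) (ρ : ℕ → GTerm) : (t.inst ρ).toTerm = t := by
  induction t <;> simp_all [Term.vars, Term.inst, GTerm.toTerm]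

def Atm.inst (ρ : ℕ → GTerm) : Atm → GAtm
  | .conc P t => .conc P (t.inst ρ)
  | .role r t u => .role r (t.inst ρ) (u.inst ρ)

lemma Atm.sat_herb_iff (S : Set GAtm) (ρ : ℕ → GTerm) (a : Atm) :
    a.sat (herb S) ρ ↔ a.inst ρ ∈ S := by
  cases a <;> simp only [Atm.sat, Atm.inst, Term.eval_herb] <;> rfl

lemma Atm.toAtm_inst {a : Atm} (ha : a.vars = ∅) (ρ : ℕ → GTerm) : (a.inst ρ).toAtm = a := by
  cases a <;> simp_all [Atm.vars, Atm.inst, GAtm.toAtm, Term.toTerm_inst]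

lemma GTerm.vars_toTerm (g : GTerm) : g.toTerm.vars = ∅ := by
  induction g <;> simp [GTerm.toTerm, Term.vars, *]

lemma GAtm.vars_toAtm (a : GAtm) : a.toAtm.vars = ∅ := by
  cases a <;> simp [GAtm.toAtm, Atm.vars, GTerm.vars_toTerm]

end GroundAtoms

section PrimeImplicates

variable {α : Type}

lemma exists_falsifying_of_clEntails_unit {c : Clause} {a : GAtm}
    (h : ClEntails c {⟨true, a.toAtm⟩}) {S : Set GAtm} (ha : a ∉ S) :
    ∃ ρ : ℕ → GTerm, ∀ l ∈ c, ¬ l.sat (herb S) ρ := by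
  by_contra! hsat
  have := (clauseSat_unit_iff _ a).1 (h _ (herb S) (fun _ hc => hc ▸ hsat))
  exact ha ((GAtm.holds_herb_iff S a).1 this)

lemma pos_of_clEntails_unit {c : Clause} {a : GAtm} (h : ClEntails c {⟨true, a.toAtm⟩})
    {l : Lit} (hl : l ∈ c) : l.pos = true := by
  obtain ⟨ρ, hρ⟩ := exists_falsifying_of_clEntails_unit h (Set.notMem_empty a)
  by_contra hneg
  apply hρ l hl
  simp [Lit.sat, hneg, Atm.sat_herb_iff]

lemma vars_nonempty_of_clEntails_unit {c : Clause} {a : GAtm} (h : ClEntails c {⟨true, a.toAtm⟩})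
    (hnot : ⟨true, a.toAtm⟩ ∉ c) {l : Lit} (hl : l ∈ c) : l.atm.vars.Nonempty := by
  obtain ⟨ρ, hρ⟩ := exists_falsifying_of_clEntails_unit h (S := {b | b ≠ a}) (by simp)
  rw [Set.nonempty_iff_ne_empty]
  intro hground
  have hinst : l.atm.inst ρ = a := by
    simpa [Lit.sat, pos_of_clEntails_unit h hl, Atm.sat_herb_iff] using hρ l hl
  obtain ⟨pos, atm⟩ := l
  obtain rfl := pos_of_clEntails_unit h hl
  exact hnot (by rwa [← hinst, Atm.toAtm_inst hground])

def FOInterp.addDeadPoint (J : FOInterp α) : FOInterp (Option α) where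
  c0 := some J.c0
  app f := Option.map (J.app f)
  conc P := some '' J.conc P
  role r := Prod.map some some '' J.role r

namespace FOInterp

variable (J : FOInterp α)

lemma eval_addDeadPoint {ρ : ℕ → Option α} {ρ' : ℕ → α} {t : Term}
    (h : ∀ x ∈ t.vars, ρ x = some (ρ' x)) : t.eval J.addDeadPoint ρ = some (t.eval J ρ') := by
  induction t with
  | var x => exact h x rfl
  | sk0 => rfl
  | app f t ih => simp only [Term.eval, ih h]; rfl

lemma eval_addDeadPoint_eq_none {ρ : ℕ → Option α} {t : Term} {x : ℕ} (hx : x ∈ t.vars)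
    (hρ : ρ x = none) : t.eval J.addDeadPoint ρ = none := by
  induction t with
  | var y => obtain rfl := Set.mem_singleton_iff.1 hx; exact hρ
  | sk0 => exact absurd hx (Set.notMem_empty x)
  | app f t ih => simp only [Term.eval, ih hx]; rfl

lemma sat_addDeadPoint_iff {ρ : ℕ → Option α} {ρ' : ℕ → α} {a : Atm}
    (h : ∀ x ∈ a.vars, ρ x = some (ρ' x)) : a.sat J.addDeadPoint ρ ↔ a.sat J ρ' := by
  cases a with
  | conc P t =>
      simp only [Atm.sat, J.eval_addDeadPoint h]
      simp [addDeadPoint]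
  | role r t u =>
      simp only [Atm.vars, Set.mem_union] at h
      simp only [Atm.sat, J.eval_addDeadPoint fun x hx => h x (Or.inl hx),
        J.eval_addDeadPoint fun x hx => h x (Or.inr hx)]
      simp [addDeadPoint]

lemma not_sat_addDeadPoint {ρ : ℕ → Option α} {a : Atm} {x : ℕ} (hx : x ∈ a.vars)
    (hρ : ρ x = none) : ¬ a.sat J.addDeadPoint ρ := by
  cases a with
  | conc P t =>
      rintro ⟨y, -, hy⟩
      exact Option.some_ne_none y (hy.trans (J.eval_addDeadPoint_eq_none (t := t) hx hρ))
  | role r t u =>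
      rintro ⟨p, -, hp⟩
      rcases (hx : x ∈ t.vars ∪ u.vars) with hx | hx
      · exact Option.some_ne_none _
          ((congrArg Prod.fst hp).trans (J.eval_addDeadPoint_eq_none hx hρ))
      · exact Option.some_ne_none _
          ((congrArg Prod.snd hp).trans (J.eval_addDeadPoint_eq_none hx hρ))

end FOInterp

def RangeRestricted (c : Clause) : Prop :=
  ∀ x ∈ ClauseVars c, ∃ l ∈ c, l.pos = false ∧ x ∈ l.atm.vars

lemma RangeRestricted.of_vars_subset {c : Clause} {l : Lit} (hl : l ∈ c) (hneg : l.pos = false)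
    (h : ∀ l' ∈ c, l'.atm.vars ⊆ l.atm.vars) : RangeRestricted c :=
  fun _ ⟨l', hl', hx⟩ => ⟨l, hl, hneg, h l' hl' hx⟩

/-- Under an assignment hitting the dead point, a range-restricted clause is satisfied by a
negative literal; otherwise the assignment comes from `J`. -/
lemma RangeRestricted.clauseSat_addDeadPoint {c : Clause} (hc : RangeRestricted c)
    {J : FOInterp α} (hJ : ClauseSat J c) : ClauseSat J.addDeadPoint c := by
  intro ρ
  by_cases hdead : ∃ x ∈ ClauseVars c, ρ x = none
  · obtain ⟨x, hx, hρ⟩ := hdead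
    obtain ⟨l, hl, hneg, hxl⟩ := hc x hx
    exact ⟨l, hl, by simp [Lit.sat, hneg, J.not_sat_addDeadPoint hxl hρ]⟩
  · simp only [not_exists, not_and] at hdead
    obtain ⟨l, hl, hsat⟩ := hJ fun x => (ρ x).getD J.c0
    have hρ : ∀ x ∈ l.atm.vars, ρ x = some ((ρ x).getD J.c0) := fun x hx => by
      obtain ⟨y, hy⟩ := Option.ne_none_iff_exists'.1 (hdead x ⟨l, hl, hx⟩)
      simp [hy]
    refine ⟨l, hl, ?_⟩
    simpa [Lit.sat, J.sat_addDeadPoint_iff hρ] using hsat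

lemma not_clauseSat_addDeadPoint {c : Clause} (hc : ∀ l ∈ c, l.pos = true ∧ l.atm.vars.Nonempty)
    (J : FOInterp α) : ¬ ClauseSat J.addDeadPoint c := by
  intro hsat
  obtain ⟨l, hl, hsat⟩ := hsat fun _ => none
  obtain ⟨hpos, x, hx⟩ := hc l hl
  simp only [Lit.sat, hpos, if_true] at hsat
  exact J.not_sat_addDeadPoint hx rfl hsat

/-- A clause entailed by `Ψ` and entailing `a` contains `a`: otherwise its literals are positive
and non-ground, so it fails at the dead point. -/
theorem isPrimeImplicate_unit_of_rangeRestricted {Ψ : Set Clause}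
    (hΨ : ∀ c ∈ Ψ, RangeRestricted c) {J : FOInterp α} (hJ : CModels J Ψ) {a : GAtm}
    (ha : CEntails Ψ {⟨true, a.toAtm⟩}) :
    IsPrimeImplicate Ψ {⟨true, a.toAtm⟩} := by
  refine ⟨ha, fun c hc hca => ?_⟩
  have hmem : ⟨true, a.toAtm⟩ ∈ c := by
    by_contra hnot
    refine not_clauseSat_addDeadPoint (fun l hl => ⟨pos_of_clEntails_unit hca hl,
      vars_nonempty_of_clEntails_unit hca hnot hl⟩) J (hc _ _ fun d hd => ?_)
    exact (hΨ d hd).clauseSat_addDeadPoint (hJ d hd)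
  intro β K hK ρ
  obtain ⟨l, hl, hsat⟩ := hK _ rfl ρ
  exact ⟨l, Finset.mem_singleton.1 hl ▸ hmem, hsat⟩

end PrimeImplicates

section TranslationClauses

variable {α : Type} (J : FOInterp α) (b : Bool)

lemma Lit.sat_pcl (A : ℕ) (t : Term) (ρ : ℕ → α) :
    (pcl b A t).sat J ρ ↔ t.eval J ρ ∈ J.conc (b, A) := Iff.rfl

lemma Lit.sat_ncl (A : ℕ) (t : Term) (ρ : ℕ → α) :
    (ncl b A t).sat J ρ ↔ t.eval J ρ ∉ J.conc (b, A) := Iff.rfl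

lemma Lit.sat_prl (r : ℕ) (t u : Term) (ρ : ℕ → α) :
    (prl r t u).sat J ρ ↔ (t.eval J ρ, u.eval J ρ) ∈ J.role r := Iff.rfl

lemma Lit.sat_nrl (r : ℕ) (t u : Term) (ρ : ℕ → α) :
    (nrl r t u).sat J ρ ↔ (t.eval J ρ, u.eval J ρ) ∉ J.role r := Iff.rfl

lemma clauseSat_sub_iff (A B : ℕ) :
    ClauseSat J {ncl b A vx, pcl b B vx} ↔ ∀ x ∈ J.conc (b, A), x ∈ J.conc (b, B) := by
  simp only [ClauseSat, Finset.exists_mem_insert, Finset.mem_singleton, exists_eq_left,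
    Lit.sat_ncl, Lit.sat_pcl, vx, Term.eval, imp_iff_not_or]
  exact ⟨fun h x => h fun _ => x, fun h ρ => h (ρ 0)⟩

lemma clauseSat_conj_iff (A₁ A₂ B : ℕ) :
    ClauseSat J {ncl b A₁ vx, ncl b A₂ vx, pcl b B vx} ↔
      ∀ x ∈ J.conc (b, A₁), x ∈ J.conc (b, A₂) → x ∈ J.conc (b, B) := by
  simp only [ClauseSat, Finset.exists_mem_insert, Finset.mem_singleton, exists_eq_left,
    Lit.sat_ncl, Lit.sat_pcl, vx, Term.eval, imp_iff_not_or]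
  exact ⟨fun h x => h fun _ => x, fun h ρ => h (ρ 0)⟩

lemma clauseSat_exists_sub_iff (r A B : ℕ) :
    ClauseSat J {nrl r vx vy, ncl b A vy, pcl b B vx} ↔
      ∀ x y, (x, y) ∈ J.role r → y ∈ J.conc (b, A) → x ∈ J.conc (b, B) := by
  simp only [ClauseSat, Finset.exists_mem_insert, Finset.mem_singleton, exists_eq_left,
    Lit.sat_nrl, Lit.sat_ncl, Lit.sat_pcl, vx, vy, Term.eval, imp_iff_not_or]
  exact ⟨fun h x y => h fun n => if n = 0 then x else y, fun h ρ => h (ρ 0) (ρ 1)⟩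

lemma clauseSat_sub_exists_role_iff (A r : ℕ) (f : SkFun) :
    ClauseSat J {ncl b A vx, prl r vx (.app f vx)} ↔
      ∀ x ∈ J.conc (b, A), (x, J.app f x) ∈ J.role r := by
  simp only [ClauseSat, Finset.exists_mem_insert, Finset.mem_singleton, exists_eq_left,
    Lit.sat_ncl, Lit.sat_prl, vx, Term.eval, imp_iff_not_or]
  exact ⟨fun h x => h fun _ => x, fun h ρ => h (ρ 0)⟩

lemma clauseSat_sub_exists_conc_iff (A B : ℕ) (f : SkFun) :
    ClauseSat J {ncl b A vx, pcl b B (.app f vx)} ↔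
      ∀ x ∈ J.conc (b, A), J.app f x ∈ J.conc (b, B) := by
  simp only [ClauseSat, Finset.exists_mem_insert, Finset.mem_singleton, exists_eq_left,
    Lit.sat_ncl, Lit.sat_pcl, vx, Term.eval, imp_iff_not_or]
  exact ⟨fun h x => h fun _ => x, fun h ρ => h (ρ 0)⟩

lemma clauseSat_pcl_sk0_iff (A : ℕ) : ClauseSat J {pcl b A .sk0} ↔ J.c0 ∈ J.conc (b, A) := by
  simp only [ClauseSat, Finset.mem_singleton, exists_eq_left, Lit.sat_pcl, Term.eval]
  exact ⟨fun h => h fun _ => J.c0, fun h _ => h⟩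

lemma clauseSat_ncl_sk0_iff (A : ℕ) : ClauseSat J {ncl b A .sk0} ↔ J.c0 ∉ J.conc (b, A) := by
  simp only [ClauseSat, Finset.mem_singleton, exists_eq_left, Lit.sat_ncl, Term.eval]
  exact ⟨fun h => h fun _ => J.c0, fun h _ => h⟩

lemma cModels_translation_iff {T : TBox} {C1 C2 : ℕ} :
    CModels J (Translation T C1 C2) ↔
      (∀ b, ∀ ci ∈ T, ∀ c ∈ clausesOf b ci, ClauseSat J c) ∧
        J.c0 ∈ J.conc (false, C1) ∧ J.c0 ∉ J.conc (true, C2) := by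
  simp only [CModels, Translation, Set.mem_union, Set.mem_iUnion, Set.mem_insert_iff,
    Set.mem_singleton_iff, or_imp, forall_and, forall_eq, Bool.forall_bool, exists_prop,
    forall_exists_index, and_imp, clauseSat_pcl_sk0_iff, clauseSat_ncl_sk0_iff]
  tauto

variable {T : TBox} {C1 C2 : ℕ}

lemma rangeRestricted_of_mem_translation (hNF : NormalForm T) {c : Clause}
    (hc : c ∈ Translation T C1 C2) : RangeRestricted c := by
  simp only [Translation, Set.mem_union, Set.mem_iUnion, Set.mem_insert_iff,
    Set.mem_singleton_iff, exists_prop] at hc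
  rcases hc with ⟨ci, hci, hc⟩ | rfl | rfl
  · obtain ⟨b, hb⟩ : ∃ b, c ∈ clausesOf b ci := hc.elim (⟨_, ·⟩) (⟨_, ·⟩)
    rcases hNF ci hci with ⟨A, B, rfl⟩ | ⟨A₁, A₂, B, rfl⟩ | ⟨r, A, B, rfl⟩ | ⟨A, r, B, rfl⟩ <;>
      simp only [clausesOf, Set.mem_singleton_iff, Set.mem_insert_iff] at hb
    · exact hb ▸ .of_vars_subset (l := ncl b A vx) (by simp) rfl (by simp [ncl, pcl, Atm.vars])
    · exact hb ▸ .of_vars_subset (l := ncl b A₁ vx) (by simp) rfl (by simp [ncl, pcl, Atm.vars])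
    · exact hb ▸ .of_vars_subset (l := nrl r vx vy) (by simp) rfl
        (by simp [ncl, pcl, nrl, Atm.vars])
    · rcases hb with rfl | rfl <;> refine .of_vars_subset (l := ncl b A vx) (by simp) rfl ?_ <;>
        simp [ncl, pcl, prl, Atm.vars, Term.vars, vx]
  all_goals
    rintro _ ⟨l, hl, hx⟩
    obtain rfl := Finset.mem_singleton.1 hl
    exact absurd hx (Set.notMem_empty _)

end TranslationClauses

section Models

variable {T : TBox} {C1 C2 : ℕ}

/-- The duplicates are empty, so the clauses of the copy `T̄` and `¬C̄₂(sk₀)` hold trivially. -/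
noncomputable def Interp.skolemize {α : Type} (I : Interp α) (d : α) : FOInterp α where
  c0 := d
  app f x :=
    match f.2.2 with
    | .ex r (.atom B) =>
        haveI : Nonempty α := ⟨d⟩
        Classical.epsilon fun y => (x, y) ∈ I.role r ∧ y ∈ I.conc B
    | _ => d
  conc P := if P.1 then ∅ else I.conc P.2
  role := I.role

lemma cModels_skolemize (hNF : NormalForm T) {α : Type} {I : Interp α} (hI : Models I T)
    {d : α} (hd : d ∈ I.conc C1) : CModels (I.skolemize d) (Translation T C1 C2) := by
  refine cModels_translation_iff _ |>.2 ⟨fun b ci hci c hc => ?_, hd, id⟩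
  have hdup : ∀ A, (I.skolemize d).conc (true, A) = ∅ := fun _ => rfl
  have hI := hI ci hci
  rcases hNF ci hci with ⟨A, B, rfl⟩ | ⟨A₁, A₂, B, rfl⟩ | ⟨r, A, B, rfl⟩ | ⟨A, r, B, rfl⟩ <;>
    simp only [clausesOf, Set.mem_singleton_iff, Set.mem_insert_iff] at hc
  · rw [hc, clauseSat_sub_iff]
    cases b
    exacts [fun x hx => hI hx, by simp [hdup]]
  · rw [hc, clauseSat_conj_iff]
    cases b
    exacts [fun x h₁ h₂ => hI ⟨h₁, h₂⟩, by simp [hdup]]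
  · rw [hc, clauseSat_exists_sub_iff]
    cases b
    exacts [fun x y hr hA => hI ⟨y, hr, hA⟩, by simp [hdup]]
  · rcases hc with rfl | rfl
    · rw [clauseSat_sub_exists_role_iff]
      cases b
      exacts [fun x hx => (Classical.epsilon_spec (hI hx)).1, by simp [hdup]]
    · rw [clauseSat_sub_exists_conc_iff]
      cases b
      exacts [fun x hx => (Classical.epsilon_spec (hI hx)).2, by simp [hdup]]

def entailedModel (Ψ : Set Clause) : Interp GTerm where
  conc A := {g | CEntails Ψ {⟨true, (GAtm.conc (false, A) g).toAtm⟩}}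
  role r := {p | CEntails Ψ {⟨true, (GAtm.role r p.1 p.2).toAtm⟩}}

lemma mem_entailedModel_conc_iff {Ψ : Set Clause} {A : ℕ} {g : GTerm} :
    g ∈ (entailedModel Ψ).conc A ↔
      ∀ (β : Type) (J : FOInterp β), CModels J Ψ → g.eval J ∈ J.conc (false, A) :=
  cEntails_unit_iff Ψ _

lemma mem_entailedModel_role_iff {Ψ : Set Clause} {r : ℕ} {g u : GTerm} :
    (g, u) ∈ (entailedModel Ψ).role r ↔
      ∀ (β : Type) (J : FOInterp β), CModels J Ψ → (g.eval J, u.eval J) ∈ J.role r :=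
  cEntails_unit_iff Ψ _

lemma models_entailedModel (hNF : NormalForm T) :
    Models (entailedModel (Translation T C1 C2)) T := by
  intro ci hci
  have hT : ∀ (β : Type) (J : FOInterp β), CModels J (Translation T C1 C2) →
      ∀ c ∈ clausesOf false ci, ClauseSat J c :=
    fun β J hJ => ((cModels_translation_iff J).1 hJ).1 false ci hci
  rcases hNF ci hci with ⟨A, B, rfl⟩ | ⟨A₁, A₂, B, rfl⟩ | ⟨r, A, B, rfl⟩ | ⟨A, r, B, rfl⟩
  · intro g hg
    simp only [ELConcept.sem, mem_entailedModel_conc_iff] at hg ⊢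
    exact fun β J hJ => (clauseSat_sub_iff J false A B).1 (hT β J hJ _ rfl) _ (hg β J hJ)
  · rintro g ⟨hg₁, hg₂⟩
    simp only [ELConcept.sem, mem_entailedModel_conc_iff] at hg₁ hg₂ ⊢
    exact fun β J hJ =>
      (clauseSat_conj_iff J false A₁ A₂ B).1 (hT β J hJ _ rfl) _ (hg₁ β J hJ) (hg₂ β J hJ)
  · rintro g ⟨u, hr, hu⟩
    simp only [ELConcept.sem, mem_entailedModel_conc_iff, mem_entailedModel_role_iff] at hr hu ⊢
    exact fun β J hJ =>
      (clauseSat_exists_sub_iff J false r A B).1 (hT β J hJ _ rfl) _ _ (hr β J hJ) (hu β J hJ)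
  · intro g hg
    simp only [ELConcept.sem, mem_entailedModel_conc_iff] at hg
    refine ⟨.app (false, (.atom A, .ex r (.atom B))) g, ?_, ?_⟩
    · exact mem_entailedModel_role_iff.2 fun β J hJ =>
        (clauseSat_sub_exists_role_iff J false A r _).1 (hT β J hJ _ (Or.inl rfl)) _ (hg β J hJ)
    · exact mem_entailedModel_conc_iff.2 fun β J hJ =>
        (clauseSat_sub_exists_conc_iff J false A B _).1 (hT β J hJ _ (Or.inr rfl)) _ (hg β J hJ)

lemma sk0_mem_entailedModel : GTerm.sk0 ∈ (entailedModel (Translation T C1 C2)).conc C1 :=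
  mem_entailedModel_conc_iff.2 fun _ J hJ => ((cModels_translation_iff J).1 hJ).2.1

lemma inPIpos_of_cEntails (hNF : NormalForm T) {a : GAtm}
    (ha : CEntails (Translation T C1 C2) {⟨true, a.toAtm⟩}) :
    InPIpos Set.univ (Translation T C1 C2) a := by
  have hsat : CModels ((entailedModel (Translation T C1 C2)).skolemize .sk0)
      (Translation T C1 C2) :=
    cModels_skolemize hNF (models_entailedModel hNF) sk0_mem_entailedModel
  refine ⟨isPrimeImplicate_unit_of_rangeRestricted
    (fun _ => rangeRestricted_of_mem_translation hNF) hsat ha, ?_, ?_, ?_⟩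
  · refine Set.eq_empty_of_forall_notMem fun x ⟨l, hl, hx⟩ => ?_
    obtain rfl := Finset.mem_singleton.1 hl
    exact (GAtm.vars_toAtm a).subset hx
  · simp [ClausePositive]
  · simp only [ClauseInSig, Finset.mem_singleton, forall_eq]
    cases a <;> trivial

lemma GAtm.holds_of_inPIpos {S : Set ℕ} {Ψ : Set Clause} {a : GAtm} (ha : InPIpos S Ψ a)
    {α : Type} {J : FOInterp α} (hJ : CModels J Ψ) : a.Holds J :=
  (cEntails_unit_iff Ψ a).1 ha.1.1 α J hJ

end Models

theorem subsumer_iff_canonical_in_pipos_general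
    (T : TBox) (C1 C2 : ℕ) (hNF : NormalForm T)
    (t : DescTree) :
    Entails T (.atom C1) t.concept ↔
      ∃ sl : ℕ → GTerm, sl t.root = GTerm.sk0 ∧
        ∀ a ∈ canonModel t sl, InPIpos Set.univ (Translation T C1 C2) a := by
  constructor
  · intro hT
    obtain ⟨sl, hroot, hlabel, hedge⟩ := (t.mem_sem_concept_iff _ _).1
      (hT _ _ (models_entailedModel hNF) (sk0_mem_entailedModel (C2 := C2)))
    refine ⟨sl, hroot, ?_⟩
    rintro a (⟨e, he, rfl⟩ | ⟨v, hv, A, hA, rfl⟩)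
    exacts [inPIpos_of_cEntails hNF (hedge e he), inPIpos_of_cEntails hNF (hlabel v hv A hA)]
  · rintro ⟨sl, hroot, hsl⟩ α I hI d hd
    have hJ := cModels_skolemize (C2 := C2) hNF hI hd
    refine (t.mem_sem_concept_iff I d).2 ⟨fun v => (sl v).eval (I.skolemize d), ?_, ?_, ?_⟩
    · simp only [hroot]; rfl
    · exact fun v hv A hA => GAtm.holds_of_inPIpos (hsl _ (Or.inr ⟨v, hv, A, hA, rfl⟩)) hJ
    · exact fun e he => GAtm.holds_of_inPIpos (hsl _ (Or.inl ⟨e, he, rfl⟩)) hJ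

/-- `T ⊨ C₁ ⊑ C_𝔗` iff some Skolem labeling rooted at `sk₀` has its
canonical model inside `PI^{g+}`. -/
theorem subsumer_iff_canonical_in_pipos
    (T : TBox) (C1 C2 : ℕ) (hNF : NormalForm T)
    (hno : ¬ Entails T (.atom C1) (.atom C2))
    (t : DescTree) :
    Entails T (.atom C1) t.concept ↔
      ∃ sl : ℕ → GTerm, sl t.root = GTerm.sk0 ∧
        ∀ a ∈ canonModel t sl, InPIpos Set.univ (Translation T C1 C2) a :=
  subsumer_iff_canonical_in_pipos_general T C1 C2 hNF t

end ELAbd
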